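/- If {u_a}_{a=1}^{n²} is a unitary error basis of M_n(ℂ), then the projections P(u_a) := ∑_{i,j} E_{i,j} ⊗ (1/n) u_a^* E_{i,j} u_a sum to the identity: ∑_{a=1}^{n²} P(u_a) = I_n ⊗ I_n. -/

import Mathlib

/-!
Flatten each `u a` to the vector `x_a = uncurry (u a)` of its `n²` entries. The orthogonality
relations say that `(1/n) Wᴴ W = 1` for the `n² × n²` matrix `W` with columns `x_a`. A one-sided
inverse of a square matrix is two-sided, so also `W ((1/n) Wᴴ) = 1`, and the transpose of this
identity is `∑ₐ (1/n) · conj(x_a) x_aᵀ = 1`, where `(1/n) · conj(x_a) x_aᵀ` is `P(u_a)`.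
-/

open Matrix Kronecker

noncomputable def Pproj (n : ℕ) (u : Matrix (Fin n) (Fin n) ℂ) :
    Matrix (Fin n × Fin n) (Fin n × Fin n) ℂ :=
  ∑ i : Fin n, ∑ j : Fin n,
    (Matrix.single i j (1 : ℂ)) ⊗ₖ
      ((1 / (n : ℂ)) • (star u * Matrix.single i j (1 : ℂ) * u))

namespace Matrix

theorem trace_conjTranspose_mul_eq_dotProduct {m n R : Type*} [Fintype m] [Fintype n]
    [NonUnitalSemiring R] [Star R] (A B : Matrix m n R) :
    (Aᴴ * B).trace = star (Function.uncurry A) ⬝ᵥ Function.uncurry B := by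
  simp only [trace, diag, mul_apply, conjTranspose_apply, dotProduct, Fintype.sum_prod_type,
    Pi.star_apply]
  exact Finset.sum_comm

theorem sum_smul_vecMulVec_star_self_eq_one {ι κ R : Type*} [Fintype ι] [Fintype κ]
    [DecidableEq ι] [DecidableEq κ] [CommRing R] [StarRing R]
    (hcard : Fintype.card ι = Fintype.card κ) (c : R) (v : ι → κ → R)
    (hv : ∀ a b, c * (star (v a) ⬝ᵥ v b) = if a = b then 1 else 0) :
    ∑ a, c • vecMulVec (star (v a)) (v a) = 1 := by
  let W : Matrix κ ι R := of fun k a => v a k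
  have hleft : (c • Wᴴ) * W = 1 := by
    ext a b
    simpa [W, mul_apply, one_apply, dotProduct, Finset.mul_sum, mul_assoc] using hv a b
  have hright : W * (c • Wᴴ) = 1 := (mul_eq_one_comm_of_card_eq ι κ R hcard).mp hleft
  ext p q
  simpa [W, mul_apply, one_apply, vecMulVec_apply, Matrix.sum_apply, eq_comm, mul_comm,
    mul_left_comm] using congr_fun₂ hright q p

end Matrix

theorem Pproj_eq_smul_vecMulVec (n : ℕ) (u : Matrix (Fin n) (Fin n) ℂ) :
    Pproj n u = (1 / (n : ℂ)) • vecMulVec (star (Function.uncurry u)) (Function.uncurry u) := by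
  ext ⟨i, k⟩ ⟨j, l⟩
  change _ = 1 / (n : ℂ) * (star (u i k) * u j l)
  simp [Pproj, Matrix.sum_apply, mul_apply, Matrix.single, ite_and]

theorem Pproj_sum_eq_one_general (n : ℕ)
    (u : Fin (n ^ 2) → Matrix (Fin n) (Fin n) ℂ)
    (horth : ∀ a b, (1 / (n : ℂ)) * Matrix.trace (star (u a) * u b) =
      if a = b then 1 else 0) :
    ∑ a, Pproj n (u a) = (1 : Matrix (Fin n × Fin n) (Fin n × Fin n) ℂ) := by
  simp only [Pproj_eq_smul_vecMulVec]
  refine sum_smul_vecMulVec_star_self_eq_one (by simp [sq]) _ _ fun a b => ?_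
  rw [← horth, star_eq_conjTranspose, trace_conjTranspose_mul_eq_dotProduct]

/-- For a unitary error basis `{u_a}_{a=1}^{n²}`, the projections `P(u_a)` sum to
the identity of `M_n(ℂ) ⊗ M_n(ℂ)`. -/
theorem Pproj_sum_eq_one (n : ℕ) [NeZero n]
    (u : Fin (n ^ 2) → Matrix (Fin n) (Fin n) ℂ)
    (hu : ∀ a, u a ∈ Matrix.unitaryGroup (Fin n) ℂ)
    (horth : ∀ a b, (1 / (n : ℂ)) * Matrix.trace (star (u a) * u b) =
      if a = b then 1 else 0) :
    ∑ a, Pproj n (u a) = (1 : Matrix (Fin n × Fin n) (Fin n × Fin n) ℂ) :=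
  Pproj_sum_eq_one_general n u horth
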